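/- Suppose V̄ ∈ C^{D×P} has linearly independent columns, X̃ ∈ R^{2×P} is any matrix of predefined positions, p* ∈ Δ_P satisfies x = X̃ p* and v = V̄ p* ≠ 0. If p̂ ∈ Δ_P satisfies that V̄ p̂ is a nonzero complex scalar multiple of v, then X̃ p̂ = x. That is, matching the feature vector up to nonzero scaling uniquely recovers the true position. -/
import Mathlib


theorem stmt_4 (D P : ℕ) (hD : 0 < D) (hP : 0 < P) (hPD : P ≤ D)
    (V : Matrix (Fin D) (Fin P) ℂ)
    (hfull : LinearIndependent ℂ (fun j : Fin P => fun i : Fin D => V i j))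
    (X : Matrix (Fin 2) (Fin P) ℝ)
    (pstar : Fin P → ℝ)
    (hpstar : (∀ i, 0 ≤ pstar i) ∧ ∑ i, pstar i = 1)
    (x : Fin 2 → ℝ) (hx : x = X.mulVec pstar)
    (vfeat : Fin D → ℂ) (hv : vfeat = V.mulVec (fun i => (pstar i : ℂ)))
    (hvnz : vfeat ≠ 0)
    (phat : Fin P → ℝ)
    (hphat : (∀ i, 0 ≤ phat i) ∧ ∑ i, phat i = 1)
    (hmatch : ∃ α : ℂ, α ≠ 0 ∧ V.mulVec (fun i => (phat i : ℂ)) = α • vfeat) :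
    X.mulVec phat = x := by
  obtain ⟨α, hα, hm⟩ := hmatch
  -- V mulVec (phat - α • pstar) = 0
  have hlin := (Fintype.linearIndependent_iff.mp hfull)
    (fun j => (phat j : ℂ) - α * (pstar j : ℂ))
  have hzero : ∀ j, (phat j : ℂ) - α * (pstar j : ℂ) = 0 := by
    apply hlin
    have : ∀ i, ∑ j, ((phat j : ℂ) - α * (pstar j : ℂ)) * V i j = 0 := by
      intro i
      have h1 := congrFun hm i
      simp only [hv, Matrix.mulVec, dotProduct, Pi.smul_apply,
        smul_eq_mul, Finset.mul_sum] at h1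
      simp only [sub_mul, Finset.sum_sub_distrib]
      rw [sub_eq_zero]
      calc ∑ j, (phat j : ℂ) * V i j = ∑ j, V i j * (phat j : ℂ) := by
            simp [mul_comm]
        _ = ∑ j, α * (V i j * (pstar j : ℂ)) := h1
        _ = ∑ j, α * (pstar j : ℂ) * V i j := Finset.sum_congr rfl (fun j _ => by ring)
    funext i
    simpa [smul_eq_mul, mul_comm] using this i
  -- sum to 1 gives α = 1
  have hsum : (1 : ℂ) = α * 1 := by
    calc (1 : ℂ) = ∑ j, (phat j : ℂ) := by
          rw [← Complex.ofReal_sum, hphat.2]; simp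
      _ = ∑ j, α * (pstar j : ℂ) := by
          apply Finset.sum_congr rfl; intro j _
          have := hzero j; linear_combination this
      _ = α * ∑ j, (pstar j : ℂ) := by rw [Finset.mul_sum]
      _ = α * 1 := by rw [← Complex.ofReal_sum, hpstar.2]; simp
  have hα1 : α = 1 := by simpa using hsum.symm
  have hpe : phat = pstar := by
    funext j
    have := hzero j
    rw [hα1, one_mul, sub_eq_zero] at this
    exact_mod_cast this
  rw [hpe, hx]
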